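/- arXiv:2012.15530 — 3 statements merged into one kernel-verified Lean document; each statement's English description precedes it below -/
import Mathlib

section
/- For every semi-norm s on ℝ², the Jacobian J(s) is at most the energy I₊²(s). Here I₊²(s) = max{s(v)² : |v| = 1} and, when s is a norm, J(s) is the unique number such that the Hausdorff 2-measure of any Borel set A ⊆ ℝ² with respect to the metric induced by s equals J(s) times the Lebesgue measure of A (and J(s) = 0 if s is degenerate). -/
/-!
If `I` is the energy of `s`, then `s v ≤ √I ‖v‖` for every `v`, so the Euclidean disc of radius
`1 / √I` lies in the unit ball of `s`. When `s` is a norm its unit ball therefore has area at least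
`π / I`, which gives `J(s) = π / |B_s| ≤ I`.
-/

open MeasureTheory Metric

namespace Seminorm

variable {E : Type*} [NormedAddCommGroup E] [NormedSpace ℝ E]

/-- The energy `I₊²(s)`. -/
noncomputable def energy (s : Seminorm ℝ E) : ℝ :=
  sSup {x : ℝ | ∃ v : E, ‖v‖ = 1 ∧ x = s v ^ 2}

lemma energy_nonneg (s : Seminorm ℝ E) : 0 ≤ s.energy :=
  Real.sSup_nonneg (by rintro _ ⟨v, -, rfl⟩; positivity)

variable [FiniteDimensional ℝ E]

lemma bddAbove_sq_on_unit_sphere (s : Seminorm ℝ E) :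
    BddAbove {x : ℝ | ∃ v : E, ‖v‖ = 1 ∧ x = s v ^ 2} := by
  have hs : Continuous s := s.convexOn.locallyLipschitz.continuous
  obtain ⟨M, hM⟩ := (isCompact_sphere (0 : E) 1).bddAbove_image (hs.pow 2).continuousOn
  refine ⟨M, ?_⟩
  rintro _ ⟨v, hv, rfl⟩
  exact hM ⟨v, by simpa using hv, rfl⟩

lemma sq_le_energy_mul_sq_norm (s : Seminorm ℝ E) (v : E) : s v ^ 2 ≤ s.energy * ‖v‖ ^ 2 := by
  rcases eq_or_ne v 0 with rfl | hv
  · simp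
  have hunit : (s ((‖v‖⁻¹ : ℝ) • v)) ^ 2 ≤ s.energy :=
    le_csSup s.bddAbove_sq_on_unit_sphere ⟨_, norm_smul_inv_norm hv, rfl⟩
  rw [map_smul_eq_mul, Real.norm_of_nonneg (by positivity), mul_pow, inv_pow,
    inv_mul_le_iff₀ (by positivity)] at hunit
  linarith

lemma energy_pos [Nontrivial E] {s : Seminorm ℝ E} (hs : ∀ v : E, v ≠ 0 → s v ≠ 0) :
    0 < s.energy := by
  obtain ⟨v, hv⟩ := exists_norm_eq E zero_le_one
  have hv0 : v ≠ 0 := norm_ne_zero_iff.1 (hv ▸ one_ne_zero)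
  calc 0 < s v ^ 2 := pow_pos ((apply_nonneg s v).lt_of_ne' (hs v hv0)) 2
    _ ≤ s.energy := le_csSup s.bddAbove_sq_on_unit_sphere ⟨v, hv, rfl⟩

lemma closedBall_subset_setOf_le_one {s : Seminorm ℝ E} (hs : 0 < s.energy) :
    Metric.closedBall (0 : E) √(s.energy⁻¹) ⊆ {v | s v ≤ 1} := by
  intro v hv
  rw [mem_closedBall_zero_iff] at hv
  have hsq : s v ^ 2 ≤ 1 :=
    calc s v ^ 2 ≤ s.energy * ‖v‖ ^ 2 := s.sq_le_energy_mul_sq_norm v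
      _ ≤ s.energy * √(s.energy⁻¹) ^ 2 := by gcongr
      _ = 1 := by rw [Real.sq_sqrt (inv_nonneg.2 hs.le), mul_inv_cancel₀ hs.ne']
  exact (sq_le_one_iff₀ (apply_nonneg s v)).1 hsq

end Seminorm

lemma ofReal_pi_div_energy_le_volume {s : Seminorm ℝ (EuclideanSpace ℝ (Fin 2))}
    (hs : 0 < s.energy) :
    ENNReal.ofReal (Real.pi / s.energy) ≤ volume {v : EuclideanSpace ℝ (Fin 2) | s v ≤ 1} :=
  calc ENNReal.ofReal (Real.pi / s.energy)
      = volume (closedBall (0 : EuclideanSpace ℝ (Fin 2)) √(s.energy⁻¹)) := by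
        rw [EuclideanSpace.volume_closedBall_fin_two, ← ENNReal.ofReal_pow (Real.sqrt_nonneg _),
          Real.sq_sqrt (inv_nonneg.2 hs.le), ← ENNReal.ofReal_mul (inv_nonneg.2 hs.le),
          div_eq_inv_mul]
    _ ≤ _ := measure_mono (Seminorm.closedBall_subset_setOf_le_one hs)

/-- For every semi-norm `s` on Euclidean `ℝ²`, the Jacobian `J(s)` is at most
the energy `I₊²(s) = sup {s(v)² : ‖v‖ = 1}`.  The Jacobian is characterized by:
`J(s) = 0` if `s` is degenerate, and `J(s) · |{v : s v ≤ 1}| = π` if `s` is a norm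
(equivalently, the Hausdorff 2-measure induced by `s` is `J(s)` times Lebesgue measure). -/
theorem jacobian_le_energy (s : Seminorm ℝ (EuclideanSpace ℝ (Fin 2))) (J : ℝ)
    (hdeg : (∃ v : EuclideanSpace ℝ (Fin 2), v ≠ 0 ∧ s v = 0) → J = 0)
    (hnorm : (∀ v : EuclideanSpace ℝ (Fin 2), v ≠ 0 → s v ≠ 0) →
      J * (volume {v : EuclideanSpace ℝ (Fin 2) | s v ≤ 1}).toReal = Real.pi) :
    J ≤ sSup {x : ℝ | ∃ v : EuclideanSpace ℝ (Fin 2), ‖v‖ = 1 ∧ x = (s v) ^ 2} := by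
  change J ≤ s.energy
  by_cases hdegenerate : ∃ v : EuclideanSpace ℝ (Fin 2), v ≠ 0 ∧ s v = 0
  · rw [hdeg hdegenerate]
    exact s.energy_nonneg
  push Not at hdegenerate
  have hJ := hnorm hdegenerate
  have hpos := Seminorm.energy_pos hdegenerate
  have hfinite : volume {v : EuclideanSpace ℝ (Fin 2) | s v ≤ 1} ≠ ⊤ := by
    intro htop
    rw [htop, ENNReal.toReal_top, mul_zero] at hJ
    exact Real.pi_ne_zero hJ.symm
  have hvol := (ENNReal.ofReal_le_iff_le_toReal hfinite).1 (ofReal_pi_div_energy_le_volume hpos)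
  have hvol_pos := (div_pos Real.pi_pos hpos).trans_le hvol
  rw [div_le_iff₀ hpos] at hvol
  nlinarith
end

section
/- Let K be a compact metric space, A ⊆ K a C-quasiconvex subset (any two points of A can be joined by a Lipschitz curve in A of length at most C times their distance), h : K → M a Lipschitz map to a metric space M, X a metric space, and v : M → X a map admitting an upper gradient ρ : M → [0,∞], i.e. d(v(γ(a)), v(γ(b))) ≤ ∫ₐᵇ ρ(γ(t))|γ'(t)| dt for every Lipschitz curve γ in M. If L := ∫_A ρ²∘h dH¹ < ∞, then v∘h restricted to A is (1/2)-Hölder continuous with Hölder constant (C·L)^{1/2}·Lip(h). -/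
open MeasureTheory Set
open scoped ENNReal NNReal

/-!
Join `x` and `y` inside `A` by an injective arclength curve `γ : [0, T] → A` with
`T ≤ C d(x, y)`. Then `h ∘ γ` is `Lip(h)`-Lipschitz, so the upper gradient inequality and
Cauchy–Schwarz give `d(v(h x), v(h y)) ≤ Lip(h) (∫₀ᵀ ρ(h(γ t))² dt)^{1/2} T^{1/2}`. Because
`H¹(γ[a, b]) = b - a`, the curve carries Lebesgue measure on `[0, T]` to `H¹` on its trace,
so the energy integral is at most `∫_A ρ²∘h dH¹ = L`.
-/

/-- The Lipschitz bound `c` of `γ` stands in for the metric speed `|γ'|`. -/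
def IsUpperGradient {M X : Type*} [PseudoEMetricSpace M] [PseudoEMetricSpace X]
    (v : M → X) (ρ : M → ℝ≥0∞) : Prop :=
  ∀ (c : ℝ≥0) (γ : ℝ → M), LipschitzWith c γ → ∀ a b : ℝ, a ≤ b →
    edist (v (γ a)) (v (γ b)) ≤ ∫⁻ t in Icc a b, ρ (γ t) * c

lemma lintegral_le_lintegral_sq_rpow_mul_measure_rpow {α : Type*} [MeasurableSpace α]
    (μ : Measure α) (f : α → ℝ≥0∞) :
    ∫⁻ a, f a ∂μ ≤ (∫⁻ a, f a ^ 2 ∂μ) ^ (1/2 : ℝ) * μ univ ^ (1/2 : ℝ) := by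
  obtain ⟨g, hg, hgf, hfg⟩ := exists_measurable_le_lintegral_eq μ f
  have hHolder := ENNReal.lintegral_mul_le_Lp_mul_Lq μ Real.HolderConjugate.two_two
    hg.aemeasurable (aemeasurable_const (b := (1 : ℝ≥0∞)))
  simp only [Pi.mul_apply, mul_one, ENNReal.one_rpow, lintegral_const, one_mul] at hHolder
  rw [hfg]
  exact hHolder.trans (by gcongr with a; exact_mod_cast pow_le_pow_left₀ zero_le (hgf a) 2)

lemma restrict_Icc_eq_volume_restrict_Icc {μ : Measure ℝ} {c d : ℝ}
    (hμ : ∀ a b, c ≤ a → a ≤ b → b ≤ d → μ (Icc a b) = ENNReal.ofReal (b - a)) :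
    μ.restrict (Icc c d) = volume.restrict (Icc c d) := by
  refine (Measure.ext_of_Icc _ _ fun a b _ => ?_).symm
  rw [Measure.restrict_apply measurableSet_Icc, Measure.restrict_apply measurableSet_Icc,
    Icc_inter_Icc]
  rcases le_or_gt (max a c) (min b d) with hle | hlt
  · rw [Real.volume_Icc, hμ _ _ (le_max_right a c) hle (min_le_right b d)]
  · simp only [Icc_eq_empty hlt.not_ge, measure_empty]

lemma setLIntegral_comp_eq_setLIntegral_image {K : Type*} [TopologicalSpace K] [T2Space K]
    [MeasurableSpace K] [BorelSpace K] {μ : Measure K} {γ : ℝ → K} {c d : ℝ}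
    (hγc : ContinuousOn γ (Icc c d)) (hγi : InjOn γ (Icc c d))
    (hγμ : ∀ a b, c ≤ a → a ≤ b → b ≤ d → μ (γ '' Icc a b) = ENNReal.ofReal (b - a))
    (g : K → ℝ≥0∞) :
    ∫⁻ t in Icc c d, g (γ t) = ∫⁻ z in γ '' Icc c d, g z ∂μ := by
  set s := Icc c d
  have : CompactSpace s := isCompact_iff_compactSpace.mp isCompact_Icc
  have hemb : MeasurableEmbedding (s.domRestrict γ) :=
    (hγc.domRestrict.isClosedEmbedding (injOn_iff_injective.mp hγi)).measurableEmbedding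
  have hval : MeasurableEmbedding (Subtype.val : s → ℝ) := .subtype_coe measurableSet_Icc
  -- `μ` pulled back to the parameter interval is Lebesgue measure there.
  set m := Measure.map Subtype.val (μ.comap (s.domRestrict γ))
  have hm : m = volume.restrict s := by
    have hsupp : m.restrict s = m := by
      rw [Measure.restrict_map measurable_subtype_coe measurableSet_Icc,
        Subtype.coe_preimage_self, Measure.restrict_univ]
    rw [← hsupp]
    refine restrict_Icc_eq_volume_restrict_Icc fun a b hca hab hbd => ?_
    rw [hval.map_apply, hemb.comap_apply, ← hγμ a b hca hab hbd, domRestrict_eq, image_comp,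
      Subtype.image_preimage_coe, inter_eq_right.mpr (Icc_subset_Icc hca hbd)]
  calc ∫⁻ t in s, g (γ t) = ∫⁻ t, g (γ t) ∂m := by rw [hm]
    _ = ∫⁻ t, g (s.domRestrict γ t) ∂(μ.comap (s.domRestrict γ)) := hval.lintegral_map _
    _ = ∫⁻ z, g z ∂(Measure.map (s.domRestrict γ) (μ.comap (s.domRestrict γ))) :=
      (hemb.lintegral_map _).symm
    _ = ∫⁻ z in γ '' s, g z ∂μ := by rw [hemb.map_comap, range_domRestrict]

lemma IsUpperGradient.edist_le {M X : Type*} [PseudoEMetricSpace M] [PseudoEMetricSpace X]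
    {v : M → X} {ρ : M → ℝ≥0∞} (hρ : IsUpperGradient v ρ) {c : ℝ≥0} {γ : ℝ → M}
    (hγ : LipschitzWith c γ) {a b : ℝ} (hab : a ≤ b) :
    edist (v (γ a)) (v (γ b)) ≤
      (∫⁻ t in Icc a b, ρ (γ t) ^ 2) ^ (1/2 : ℝ) * ENNReal.ofReal (b - a) ^ (1/2 : ℝ) * c := by
  have hCS := lintegral_le_lintegral_sq_rpow_mul_measure_rpow
    (volume.restrict (Icc a b)) fun t => ρ (γ t)
  rw [Measure.restrict_apply_univ, Real.volume_Icc] at hCS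
  calc edist (v (γ a)) (v (γ b)) ≤ ∫⁻ t in Icc a b, ρ (γ t) * c := hρ c γ hγ a b hab
    _ = (∫⁻ t in Icc a b, ρ (γ t)) * c := lintegral_mul_const' _ _ ENNReal.coe_ne_top
    _ ≤ _ := by gcongr

theorem holder_of_upper_gradient_on_quasiconvex_general
    {K M X : Type*} [MetricSpace K] [MetricSpace M] [MetricSpace X]
    [MeasurableSpace K] [BorelSpace K]
    (A : Set K) (C : ℝ≥0)
    (hqc : ∀ x ∈ A, ∀ y ∈ A, ∃ (T : ℝ) (γ : ℝ → K), 0 ≤ T ∧ T ≤ C * dist x y ∧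
      (∀ t ∈ Icc (0 : ℝ) T, γ t ∈ A) ∧ γ 0 = x ∧ γ T = y ∧ LipschitzWith 1 γ ∧
      InjOn γ (Icc (0 : ℝ) T) ∧
      ∀ a b : ℝ, 0 ≤ a → a ≤ b → b ≤ T → μH[1] (γ '' Icc a b) = ENNReal.ofReal (b - a))
    (h : K → M) (Lh : ℝ≥0) (hh : LipschitzWith Lh h)
    (v : M → X) (ρ : M → ℝ≥0∞)
    (hug : ∀ (c : ℝ≥0) (γ : ℝ → M), LipschitzWith c γ → ∀ a b : ℝ, a ≤ b →
      edist (v (γ a)) (v (γ b)) ≤ ∫⁻ t in Icc a b, ρ (γ t) * c)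
    (L : ℝ≥0∞) (hL : L = ∫⁻ x in A, (ρ (h x)) ^ 2 ∂μH[1]) :
    ∀ x ∈ A, ∀ y ∈ A,
      edist (v (h x)) (v (h y)) ≤
        ((C : ℝ≥0∞) * L) ^ (1/2 : ℝ) * (Lh : ℝ≥0∞) * (edist x y) ^ (1/2 : ℝ) := by
  intro x hx y hy
  obtain ⟨T, γ, hT0, hTC, hγA, rfl, rfl, hγlip, hγinj, hγH⟩ := hqc x hx y hy
  have henergy : ∫⁻ t in Icc 0 T, ρ (h (γ t)) ^ 2 ≤ L := by
    rw [setLIntegral_comp_eq_setLIntegral_image hγlip.continuous.continuousOn hγinj hγH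
      fun z => ρ (h z) ^ 2, hL]
    exact lintegral_mono_set (image_subset_iff.mpr hγA)
  have hlength : ENNReal.ofReal T ≤ C * edist (γ 0) (γ T) := by
    rw [edist_dist, ← ENNReal.ofReal_coe_nnreal, ← ENNReal.ofReal_mul C.coe_nonneg]
    exact ENNReal.ofReal_le_ofReal hTC
  calc edist (v (h (γ 0))) (v (h (γ T)))
      ≤ (∫⁻ t in Icc 0 T, ρ (h (γ t)) ^ 2) ^ (1/2 : ℝ) * ENNReal.ofReal (T - 0) ^ (1/2 : ℝ) *
          (Lh * 1 : ℝ≥0) :=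
        IsUpperGradient.edist_le hug (hh.comp hγlip) hT0
    _ ≤ L ^ (1/2 : ℝ) * (C * edist (γ 0) (γ T)) ^ (1/2 : ℝ) * Lh := by
        rw [sub_zero, mul_one]
        gcongr
    _ = (C * L) ^ (1/2 : ℝ) * Lh * edist (γ 0) (γ T) ^ (1/2 : ℝ) := by
        rw [ENNReal.mul_rpow_of_nonneg _ _ (by norm_num),
          ENNReal.mul_rpow_of_nonneg _ _ (by norm_num)]
        ring

/-- Let `A ⊆ K` be a `C`-quasiconvex subset of a compact metric space (any two
points of `A` are joined by a simple arclength-parametrized curve in `A` of length at most `C`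
times their distance), `h : K → M` Lipschitz, and `v : M → X` a map with upper gradient
`ρ : M → [0,∞]` (so that `d(v(γ(a)), v(γ(b))) ≤ ∫ₐᵇ ρ(γ(t)) |γ'(t)| dt` along Lipschitz
curves).  If `L = ∫_A ρ²∘h dH¹ < ∞`, then `v ∘ h` restricted to `A` is `(1/2)`-Hölder
continuous with Hölder constant `(C·L)^{1/2} · Lip(h)`. -/
theorem holder_of_upper_gradient_on_quasiconvex
    {K M X : Type*} [MetricSpace K] [CompactSpace K] [MetricSpace M] [MetricSpace X]
    [MeasurableSpace K] [BorelSpace K]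
    (A : Set K) (C : ℝ≥0)
    (hqc : ∀ x ∈ A, ∀ y ∈ A, ∃ (T : ℝ) (γ : ℝ → K), 0 ≤ T ∧ T ≤ C * dist x y ∧
      (∀ t ∈ Icc (0 : ℝ) T, γ t ∈ A) ∧ γ 0 = x ∧ γ T = y ∧ LipschitzWith 1 γ ∧
      InjOn γ (Icc (0 : ℝ) T) ∧
      ∀ a b : ℝ, 0 ≤ a → a ≤ b → b ≤ T → μH[1] (γ '' Icc a b) = ENNReal.ofReal (b - a))
    (h : K → M) (Lh : ℝ≥0) (hh : LipschitzWith Lh h)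
    (v : M → X) (ρ : M → ℝ≥0∞)
    (hug : ∀ (c : ℝ≥0) (γ : ℝ → M), LipschitzWith c γ → ∀ a b : ℝ, a ≤ b →
      edist (v (γ a)) (v (γ b)) ≤ ∫⁻ t in Icc a b, ρ (γ t) * c)
    (L : ℝ≥0∞) (hL : L = ∫⁻ x in A, (ρ (h x)) ^ 2 ∂μH[1]) (hLfin : L ≠ ∞) :
    ∀ x ∈ A, ∀ y ∈ A,
      edist (v (h x)) (v (h y)) ≤
        ((C : ℝ≥0∞) * L) ^ (1/2 : ℝ) * (Lh : ℝ≥0∞) * (edist x y) ^ (1/2 : ℝ) :=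
  holder_of_upper_gradient_on_quasiconvex_general A C hqc h Lh hh v ρ hug L hL
end

section
/- Let X be a geodesic metric space with the property that every closed curve in X of diameter at most 4r₀ is contractible, and let Γ = Γ₁ ∪ … ∪ Γ_k be a disjoint union of rectifiable Jordan curves in X with diam(Γᵢ) ≥ 3r₀ for all i. Then there exists δ with 0 < δ < r₀/3 such that whenever x, y ∈ Γ satisfy d(x,y) ≤ 9δ, then x and y lie on the same Jordan curve Γᵢ and one of the two arcs of Γᵢ joining x and y has diameter at most r₀. -/
/-!
Everything follows from compactness. Distinct curves are disjoint compact sets, hence at positive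
distance. Each curve is the image of the compact circle `ℝ ⧸ ℤ` under a continuous injection,
which is therefore a homeomorphism onto the curve with uniformly continuous inverse: close points
of the curve have close parameters, and by uniform continuity of the parametrization the image of
the short parameter interval between them is a connected subset of small diameter.
-/

open Set Metric Filter Topology Function
open scoped ENNReal

lemma eventually_forall_dist_le_imp_eq {X ι : Type*} [MetricSpace X] [Finite ι] {K : ι → Set X}
    (hK : ∀ i, IsCompact (K i)) (hdisj : Pairwise (Disjoint on K)) :
    ∀ᶠ ε in 𝓝[>] (0 : ℝ), ∀ i j, ∀ x ∈ K i, ∀ y ∈ K j, dist x y ≤ ε → i = j := by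
  refine eventually_all.2 fun i => eventually_all.2 fun j => ?_
  rcases eq_or_ne i j with rfl | hij
  · exact Eventually.of_forall fun _ _ _ _ _ _ => rfl
  obtain ⟨r, hr, hsep⟩ := exists_pos_forall_lt_edist (hK i) (hK j).isClosed (hdisj hij)
  filter_upwards [Ioo_mem_nhdsGT (NNReal.coe_pos.2 hr)] with ε hε x hx y hy hxy
  have hrxy := hsep x hx y hy
  rw [edist_dist, ← ENNReal.ofReal_coe_nnreal, ENNReal.ofReal_lt_ofReal_iff'] at hrxy
  linarith [hε.2, hrxy.1]

lemma Continuous.exists_pos_dist_lt_imp_dist_lt {S X : Type*} [MetricSpace S] [CompactSpace S]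
    [MetricSpace X] {γ : S → X} (hγ : Continuous γ) (hinj : Injective γ) {θ : ℝ} (hθ : 0 < θ) :
    ∃ ε > 0, ∀ p q, dist (γ p) (γ q) < ε → dist p q < θ := by
  let e := (hγ.isClosedEmbedding hinj).isEmbedding.toHomeomorph
  have : CompactSpace (range γ) := isCompact_iff_compactSpace.1 (isCompact_range hγ)
  obtain ⟨ε, hε, h⟩ := Metric.uniformContinuous_iff.1
    (CompactSpace.uniformContinuous_of_continuous e.symm.continuous) θ hθ
  exact ⟨ε, hε, fun p q hpq => by simpa [e] using h (a := e p) (b := e q) hpq⟩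

lemma AddCircle.exists_coe_eq_abs_sub_lt {T θ s : ℝ} {q : AddCircle T}
    (h : dist (s : AddCircle T) q < θ) : ∃ t : ℝ, (t : AddCircle T) = q ∧ |s - t| < θ := by
  obtain ⟨t, rfl⟩ := QuotientAddGroup.mk_surjective q
  refine ⟨t + round (T⁻¹ * (s - t)) • T, by simp, ?_⟩
  rw [dist_eq_norm, ← AddCircle.coe_sub, AddCircle.norm_eq] at h
  convert h using 2
  rw [zsmul_eq_mul]
  ring

namespace Function.Periodic

variable {α : Type*} {c : ℝ → α} {T : ℝ}

lemma injective_lift [Fact (0 < T)] (hper : Periodic c T) (hinj : InjOn c (Ico 0 T)) :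
    Injective hper.lift := by
  intro x y h
  rw [← AddCircle.coe_equivIco (a := 0) (y := x), ← AddCircle.coe_equivIco (a := 0) (y := y)]
    at h ⊢
  rw [hper.lift_coe, hper.lift_coe] at h
  rw [hinj (by simpa using (AddCircle.equivIco T 0 x).2)
    (by simpa using (AddCircle.equivIco T 0 y).2) h]

lemma continuous_lift [TopologicalSpace α] (hper : Periodic c T) (hcont : Continuous c) :
    Continuous hper.lift :=
  continuous_quot_lift _ hcont

lemma uniformContinuous [UniformSpace α] [Fact (0 < T)] (hper : Periodic c T)
    (hcont : Continuous c) : UniformContinuous c :=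
  (CompactSpace.uniformContinuous_of_continuous (hper.continuous_lift hcont)).comp
    (uniformContinuous_addMonoidHom_of_continuous (AddCircle.continuous_mk' T))

lemma exists_pos_dist_lt_imp_exists_abs_sub_lt [MetricSpace α] [Fact (0 < T)]
    (hper : Periodic c T) (hcont : Continuous c) (hinj : InjOn c (Ico 0 T)) {θ : ℝ}
    (hθ : 0 < θ) : ∃ ε > 0, ∀ s t, dist (c s) (c t) < ε → ∃ t', c t' = c t ∧ |s - t'| < θ := by
  obtain ⟨ε, hε, h⟩ := (hper.continuous_lift hcont).exists_pos_dist_lt_imp_dist_lt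
    (hper.injective_lift hinj) hθ
  refine ⟨ε, hε, fun s t hst => ?_⟩
  obtain ⟨t', ht', hst'⟩ := AddCircle.exists_coe_eq_abs_sub_lt (h s t hst)
  exact ⟨t', by rw [← hper.lift_coe, ht', hper.lift_coe], hst'⟩

theorem eventually_exists_isConnected_diam_le [MetricSpace α] [Fact (0 < T)]
    (hper : Periodic c T) (hcont : Continuous c) (hinj : InjOn c (Ico 0 T)) {r : ℝ} (hr : 0 < r) :
    ∀ᶠ ε in 𝓝[>] (0 : ℝ), ∀ x ∈ range c, ∀ y ∈ range c, dist x y ≤ ε →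
      ∃ A ⊆ range c, IsConnected A ∧ x ∈ A ∧ y ∈ A ∧ diam A ≤ r := by
  obtain ⟨θ, hθ, hsmall⟩ := Metric.uniformContinuous_iff.1 (hper.uniformContinuous hcont) r hr
  obtain ⟨ε₀, hε₀, hclose⟩ := hper.exists_pos_dist_lt_imp_exists_abs_sub_lt hcont hinj hθ
  filter_upwards [Ioo_mem_nhdsGT hε₀] with ε hε
  rintro _ ⟨s, rfl⟩ _ ⟨t, rfl⟩ hst
  obtain ⟨t', ht', hst'⟩ := hclose s t (hst.trans_lt hε.2)
  refine ⟨c '' uIcc s t', image_subset_range _ _,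
    ⟨nonempty_uIcc.image _, isPreconnected_uIcc.image _ hcont.continuousOn⟩,
    mem_image_of_mem _ left_mem_uIcc, ht' ▸ mem_image_of_mem _ right_mem_uIcc,
    diam_le_of_forall_dist_le hr.le ?_⟩
  rintro _ ⟨u, hu, rfl⟩ _ ⟨v, hv, rfl⟩
  exact (hsmall ((Real.dist_le_of_mem_uIcc hu hv).trans_lt hst')).le

end Function.Periodic

theorem close_points_on_same_jordan_curve_general
    {X : Type*} [MetricSpace X]
    (r₀ : ℝ) (hr₀ : 0 < r₀)
    (k : ℕ) (c : Fin k → ℝ → X)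
    (hc : ∀ i, Continuous (c i) ∧ Function.Periodic (c i) 1 ∧
      InjOn (c i) (Ico (0 : ℝ) 1) ∧ eVariationOn (c i) (Icc (0 : ℝ) 1) ≠ ∞)
    (hdisj : ∀ i j, i ≠ j → Disjoint (c i '' Icc (0 : ℝ) 1) (c j '' Icc (0 : ℝ) 1)) :
    ∃ δ : ℝ, 0 < δ ∧ δ < r₀ / 3 ∧ ∀ x y : X,
      x ∈ ⋃ i, c i '' Icc (0 : ℝ) 1 → y ∈ ⋃ i, c i '' Icc (0 : ℝ) 1 → dist x y ≤ 9 * δ →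
      ∃ i, x ∈ c i '' Icc (0 : ℝ) 1 ∧ y ∈ c i '' Icc (0 : ℝ) 1 ∧
        ∃ A : Set X, A ⊆ c i '' Icc (0 : ℝ) 1 ∧ IsConnected A ∧ x ∈ A ∧ y ∈ A ∧
          diam A ≤ r₀ := by
  have : Fact ((0 : ℝ) < 1) := ⟨one_pos⟩
  have hrange : ∀ i, c i '' Icc 0 1 = range (c i) := fun i => by
    simpa using (hc i).2.1.image_Icc one_pos 0
  simp only [hrange] at hdisj ⊢
  have hsep := eventually_forall_dist_le_imp_eq
    (fun i => hrange i ▸ isCompact_Icc.image (hc i).1) hdisj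
  have harc := eventually_all.2 fun i =>
    (hc i).2.1.eventually_exists_isConnected_diam_le (hc i).1 (hc i).2.2.1 hr₀
  obtain ⟨ε, ⟨⟨hsepε, harcε⟩, hεr⟩, hε⟩ :=
    ((hsep.and harc).and (Ioo_mem_nhdsGT (by positivity : (0 : ℝ) < 3 * r₀))).and
      self_mem_nhdsWithin |>.exists
  refine ⟨ε / 9, by positivity, by linarith [hεr.2], ?_⟩
  intro x y hx hy hxy
  obtain ⟨i, hxi⟩ := mem_iUnion.1 hx
  obtain ⟨j, hyj⟩ := mem_iUnion.1 hy
  obtain rfl := hsepε i j x hxi y hyj (by linarith)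
  exact ⟨i, hxi, hyj, harcε i x hxi y hyj (by linarith)⟩

/-- Let `X` be a geodesic metric space in which every closed curve of diameter
at most `4r₀` is contractible, and let `Γ = Γ₁ ∪ … ∪ Γ_k` be a disjoint union of rectifiable
Jordan curves (parametrized by continuous injective periodic loops `c i` of finite length)
with `diam Γᵢ ≥ 3r₀`.  Then there exists `δ ∈ (0, r₀/3)` such that any `x, y ∈ Γ` with
`d(x,y) ≤ 9δ` lie on the same Jordan curve `Γᵢ`, and one of the two arcs of `Γᵢ` joining `x`
and `y` (formalized: some connected subset of `Γᵢ` containing `x` and `y`) has diameter at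
most `r₀`. -/
theorem close_points_on_same_jordan_curve
    {X : Type*} [MetricSpace X]
    (hgeodesic : ∀ x y : X, ∃ γ : C(unitInterval, X), γ 0 = x ∧ γ 1 = y ∧
      ∀ s t : unitInterval, dist (γ s) (γ t) = |(s : ℝ) - (t : ℝ)| * dist x y)
    (r₀ : ℝ) (hr₀ : 0 < r₀)
    (hcontr : ∀ γ : C((sphere (0 : EuclideanSpace ℝ (Fin 2)) 1 :
        Set (EuclideanSpace ℝ (Fin 2))), X),
      diam (range γ) ≤ 4 * r₀ → ∃ x : X, ContinuousMap.Homotopic γ (ContinuousMap.const _ x))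
    (k : ℕ) (c : Fin k → ℝ → X)
    (hc : ∀ i, Continuous (c i) ∧ Function.Periodic (c i) 1 ∧
      InjOn (c i) (Ico (0 : ℝ) 1) ∧ eVariationOn (c i) (Icc (0 : ℝ) 1) ≠ ∞)
    (hdisj : ∀ i j, i ≠ j → Disjoint (c i '' Icc (0 : ℝ) 1) (c j '' Icc (0 : ℝ) 1))
    (hdiam : ∀ i, 3 * r₀ ≤ diam (c i '' Icc (0 : ℝ) 1)) :
    ∃ δ : ℝ, 0 < δ ∧ δ < r₀ / 3 ∧ ∀ x y : X,
      x ∈ ⋃ i, c i '' Icc (0 : ℝ) 1 → y ∈ ⋃ i, c i '' Icc (0 : ℝ) 1 → dist x y ≤ 9 * δ →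
      ∃ i, x ∈ c i '' Icc (0 : ℝ) 1 ∧ y ∈ c i '' Icc (0 : ℝ) 1 ∧
        ∃ A : Set X, A ⊆ c i '' Icc (0 : ℝ) 1 ∧ IsConnected A ∧ x ∈ A ∧ y ∈ A ∧
          diam A ≤ r₀ :=
  close_points_on_same_jordan_curve_general r₀ hr₀ k c hc hdisj
end
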